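/- arXiv:2110.10410 — 4 statements merged into one kernel-verified Lean document; each statement's English description precedes it below -/
import Mathlib

section
/- Let G be an edge-maximal outerplanar graph on n ≥ 3 vertices (i.e., G is outerplanar, but adding any edge between two nonadjacent vertices of G destroys outerplanarity). Then G contains a cycle of length l for every l with 3 ≤ l ≤ n. -/
/-- A simple graph is outerplanar if it admits a one-page book embedding:
an injective integer labeling of the vertices such that no two edges interleave. -/
def IsOuterplanar {V : Type*} (G : SimpleGraph V) : Prop :=
  ∃ f : V → ℤ, Function.Injective f ∧
    ∀ a b c d : V, G.Adj a b → G.Adj c d →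
      ¬(f a < f c ∧ f c < f b ∧ f b < f d)

/-- `G` contains a subgraph isomorphic to `H`. -/
def ContainsCopy {W V : Type*} (H : SimpleGraph W) (G : SimpleGraph V) : Prop :=
  ∃ φ : H →g G, Function.Injective φ

/-- The outerplanar Turán number: maximum number of edges of an `H`-free
outerplanar graph on `n` vertices. -/
noncomputable def exOP (n : ℕ) {W : Type*} (H : SimpleGraph W) : ℕ :=
  sSup {m : ℕ | ∃ G : SimpleGraph (Fin n),
    IsOuterplanar G ∧ ¬ ContainsCopy H G ∧ m = G.edgeSet.ncard}


lemma aux_path {n : ℕ} (E : Fin n → Fin n → Prop)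
    (htri : ∀ i j : Fin n, i < j → (i : ℕ) + 2 ≤ (j : ℕ) → E i j →
      ∃ k, i < k ∧ k < j ∧ E i k ∧ E k j) :
    ∀ d : ℕ, ∀ i j : Fin n, i < j → (j : ℕ) - (i : ℕ) = d → E i j →
      ∀ e : ℕ, 1 ≤ e → e ≤ d →
      ∃ u : ℕ → Fin n, u 0 = i ∧ u e = j ∧
        (∀ t, t < e → E (u t) (u (t + 1))) ∧
        (∀ s t, s ≤ e → t ≤ e → u s = u t → s = t) ∧
        (∀ t, 0 < t → t < e → i < u t ∧ u t < j) := by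
  intro d
  induction d using Nat.strong_induction_on with
  | _ d ih =>
    intro i j hij hd hE e he1 hed
    rcases eq_or_lt_of_le he1 with he1' | he2
    · -- e = 1
      refine ⟨fun t => if t = 0 then i else j, by simp, ?_, ?_, ?_, ?_⟩
      · simp [← he1']
      · intro t ht
        have : t = 0 := by omega
        subst this
        simpa using hE
      · intro s t hs ht hst
        have hs' : s = 0 ∨ s = 1 := by omega
        have ht' : t = 0 ∨ t = 1 := by omega
        rcases hs' with rfl | rfl <;> rcases ht' with rfl | rfl
        · rfl
        · exact absurd hst (by simpa using hij.ne)
        · exact absurd hst.symm (by simpa using hij.ne)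
        · rfl
      · intro t ht ht'; omega
    · -- e ≥ 2, hence d ≥ 2
      have hd2 : 2 ≤ d := le_trans he2 hed
      have hij' : (i : ℕ) + 2 ≤ (j : ℕ) := by omega
      obtain ⟨k, hik, hkj, hEik, hEkj⟩ := htri i j hij hij' hE
      have hikn : (i : ℕ) < (k : ℕ) := hik
      have hkjn : (k : ℕ) < (j : ℕ) := hkj
      set d1 := (k : ℕ) - (i : ℕ) with hd1
      set d2 := (j : ℕ) - (k : ℕ) with hd2'
      have hdsum : d1 + d2 = d := by omega
      set e1 := max 1 (e - d2) with he1def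
      set e2 := e - e1 with he2def
      have h1 : 1 ≤ e1 := le_max_left _ _
      have h2 : e1 ≤ d1 := by omega
      have h3 : 1 ≤ e2 := by omega
      have h4 : e2 ≤ d2 := by omega
      have he12 : e1 + e2 = e := by omega
      obtain ⟨u1, hu10, hu1e, hu1edge, hu1inj, hu1int⟩ :=
        ih d1 (by omega) i k hik rfl hEik e1 h1 h2
      obtain ⟨u2, hu20, hu2e, hu2edge, hu2inj, hu2int⟩ :=
        ih d2 (by omega) k j hkj rfl hEkj e2 h3 h4
      have hu1le : ∀ s, s ≤ e1 → u1 s ≤ k := by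
        intro s hs
        rcases Nat.eq_zero_or_pos s with rfl | hs0
        · rw [hu10]; exact le_of_lt hik
        · rcases eq_or_lt_of_le hs with rfl | hs'
          · rw [hu1e]
          · exact le_of_lt (hu1int s hs0 hs').2
      have hu2gt : ∀ s, 1 ≤ s → s ≤ e2 → k < u2 s := by
        intro s hs0 hs
        rcases eq_or_lt_of_le hs with rfl | hs'
        · rw [hu2e]; exact hkj
        · exact (hu2int s hs0 hs').1
      refine ⟨fun t => if t ≤ e1 then u1 t else u2 (t - e1), ?_, ?_, ?_, ?_, ?_⟩
      · simp only [if_pos (show (0:ℕ) ≤ e1 by omega)]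
        exact hu10
      · have : ¬ e ≤ e1 := by omega
        simp only [this, if_false]
        have : e - e1 = e2 := by omega
        rw [this, hu2e]
      · intro t ht
        by_cases h : t + 1 ≤ e1
        · have h' : t ≤ e1 := by omega
          simp only [h, h', if_true]
          exact hu1edge t (by omega)
        · by_cases h' : t ≤ e1
          · -- t = e1
            have : t = e1 := by omega
            subst this
            simp only [h', h, if_true, if_false]
            rw [show e1 + 1 - e1 = 1 by omega, hu1e, ← hu20]
            exact hu2edge 0 (by omega)
          · simp only [h, h', if_false]
            have : t + 1 - e1 = (t - e1) + 1 := by omega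
            rw [this]
            exact hu2edge (t - e1) (by omega)
      · intro s t hs ht hst
        by_cases h1' : s ≤ e1 <;> by_cases h2' : t ≤ e1
        · simp only [h1', h2', if_true] at hst
          exact hu1inj s t h1' h2' hst
        · simp only [h1', h2', if_true, if_false] at hst
          exfalso
          have hA := hu1le s h1'
          have hB := hu2gt (t - e1) (by omega) (by omega)
          rw [hst] at hA
          exact absurd hA (not_le.mpr hB)
        · simp only [h1', h2', if_true, if_false] at hst
          exfalso
          have hA := hu1le t h2'
          have hB := hu2gt (s - e1) (by omega) (by omega)
          rw [← hst] at hA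
          exact absurd hA (not_le.mpr hB)
        · simp only [h1', h2', if_false] at hst
          have := hu2inj (s - e1) (t - e1) (by omega) (by omega) hst
          omega
      · intro t ht0 hte
        by_cases h : t ≤ e1
        · simp only [h, if_true]
          rcases eq_or_lt_of_le h with rfl | h'
          · rw [hu1e]; exact ⟨hik, hkj⟩
          · have := hu1int t ht0 h'
            exact ⟨this.1, lt_trans this.2 hkj⟩
        · simp only [h, if_false]
          have := hu2gt (t - e1) (by omega) (by omega)
          constructor
          · exact lt_trans hik this
          · rcases eq_or_lt_of_le (show t - e1 ≤ e2 by omega) with heq | h'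
            · exfalso; omega
            · exact (hu2int (t - e1) (by omega) h').2

lemma add_edge_conflict {n : ℕ} (G : SimpleGraph (Fin n)) (f : Fin n → ℤ)
    (hfinj : Function.Injective f)
    (hno : ∀ a b c d : Fin n, G.Adj a b → G.Adj c d →
      ¬(f a < f c ∧ f c < f b ∧ f b < f d))
    (u w : Fin n) (hne : u ≠ w) (hlt : f u < f w)
    (hnop : ¬ IsOuterplanar (G ⊔ SimpleGraph.fromEdgeSet {s(u, w)})) :
    ∃ c d : Fin n, G.Adj c d ∧
      ((f u < f c ∧ f c < f w ∧ f w < f d) ∨ (f c < f u ∧ f u < f d ∧ f d < f w)) := by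
  by_contra hcon
  push_neg at hcon
  apply hnop
  refine ⟨f, hfinj, ?_⟩
  rintro a b c d hab hcd ⟨h1, h2, h3⟩
  have hadj : ∀ x y : Fin n, (G ⊔ SimpleGraph.fromEdgeSet {s(u, w)}).Adj x y →
      G.Adj x y ∨ (x = u ∧ y = w) ∨ (x = w ∧ y = u) := by
    intro x y hxy
    rcases hxy with h | h
    · exact Or.inl h
    · rw [SimpleGraph.fromEdgeSet_adj, Set.mem_singleton_iff, Sym2.eq_iff] at h
      rcases h.1 with ⟨rfl, rfl⟩ | ⟨rfl, rfl⟩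
      · exact Or.inr (Or.inl ⟨rfl, rfl⟩)
      · exact Or.inr (Or.inr ⟨rfl, rfl⟩)
  rcases hadj a b hab with hab' | ⟨rfl, rfl⟩ | ⟨rfl, rfl⟩ <;>
    rcases hadj c d hcd with hcd' | ⟨rfl, rfl⟩ | ⟨rfl, rfl⟩
  · exact hno a b c d hab' hcd' ⟨h1, h2, h3⟩
  · obtain ⟨hA, hB⟩ := hcon a b hab'
    omega
  · omega
  · obtain ⟨hA, hB⟩ := hcon c d hcd'
    omega
  · omega
  · omega
  · omega
  · omega
  · omega

theorem maximal_outerplanar_pancyclic (n : ℕ) (hn : 3 ≤ n) (G : SimpleGraph (Fin n))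
    (hG : IsOuterplanar G)
    (hmax : ∀ u v : Fin n, u ≠ v → ¬ G.Adj u v →
      ¬ IsOuterplanar (G ⊔ SimpleGraph.fromEdgeSet {s(u, v)}))
    (l : ℕ) (hl3 : 3 ≤ l) (hln : l ≤ n) :
    ContainsCopy (SimpleGraph.cycleGraph l) G := by
  classical
  obtain ⟨f, hfinj, hno⟩ := hG
  set v : Fin n → Fin n := ⇑(Tuple.sort f) with hv
  have hvinj : Function.Injective v := (Tuple.sort f).injective
  have hvsurj : Function.Surjective v := (Tuple.sort f).surjective
  have hmono : StrictMono (f ∘ v) :=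
    (Tuple.monotone_sort f).strictMono_of_injective (hfinj.comp hvinj)
  set E : Fin n → Fin n → Prop := fun i j => G.Adj (v i) (v j) with hE
  have noX : ∀ i j k m : Fin n, E i j → E k m → ¬(i < k ∧ k < j ∧ j < m) := by
    rintro i j k m h1 h2 ⟨ha, hb, hc⟩
    exact hno (v i) (v j) (v k) (v m) h1 h2 ⟨hmono ha, hmono hb, hmono hc⟩
  have conflictE : ∀ i j : Fin n, i < j → ¬ E i j →
      ∃ c d : Fin n, E c d ∧ ((i < c ∧ c < j ∧ j < d) ∨ (c < i ∧ i < d ∧ d < j)) := by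
    intro i j hij hnE
    have hne : v i ≠ v j := fun h => absurd (hvinj h) hij.ne
    obtain ⟨c, d, hcd, hdisj⟩ := add_edge_conflict G f hfinj hno (v i) (v j) hne
      (hmono hij) (hmax _ _ hne hnE)
    obtain ⟨c', rfl⟩ := hvsurj c
    obtain ⟨d', rfl⟩ := hvsurj d
    refine ⟨c', d', hcd, ?_⟩
    rcases hdisj with ⟨h1, h2, h3⟩ | ⟨h1, h2, h3⟩
    · exact Or.inl ⟨hmono.lt_iff_lt.mp h1, hmono.lt_iff_lt.mp h2, hmono.lt_iff_lt.mp h3⟩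
    · exact Or.inr ⟨hmono.lt_iff_lt.mp h1, hmono.lt_iff_lt.mp h2, hmono.lt_iff_lt.mp h3⟩
  have consec : ∀ i j : Fin n, i < j → (j : ℕ) = (i : ℕ) + 1 → E i j := by
    intro i j hij hji
    by_contra hnE
    obtain ⟨c, d, _, hdisj⟩ := conflictE i j hij hnE
    rcases hdisj with ⟨h1, h2, _⟩ | ⟨_, h2, h3⟩
    · have hA : (i : ℕ) < (c : ℕ) := h1
      have hB : (c : ℕ) < (j : ℕ) := h2
      omega
    · have hA : (i : ℕ) < (d : ℕ) := h2
      have hB : (d : ℕ) < (j : ℕ) := h3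
      omega
  set i0 : Fin n := ⟨0, by omega⟩ with hi0
  set iN : Fin n := ⟨n - 1, by omega⟩ with hiN
  have hi0N : i0 < iN := by
    rw [Fin.lt_def]; simp [hi0, hiN]; omega
  have wrap : E i0 iN := by
    by_contra hnE
    obtain ⟨c, d, _, hdisj⟩ := conflictE i0 iN hi0N hnE
    rcases hdisj with ⟨_, _, h3⟩ | ⟨h1, _, _⟩
    · have hA : (iN : ℕ) < (d : ℕ) := h3
      have := d.isLt
      simp [hiN] at hA
      omega
    · have hA : (c : ℕ) < (i0 : ℕ) := h1
      simp [hi0] at hA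
  have htri : ∀ i j : Fin n, i < j → (i : ℕ) + 2 ≤ (j : ℕ) → E i j →
      ∃ k, i < k ∧ k < j ∧ E i k ∧ E k j := by
    intro i j hij hij2 hEij
    by_contra hcon
    push_neg at hcon
    set K : Finset (Fin n) := Finset.univ.filter (fun k : Fin n => i < k ∧ k < j ∧ E i k)
      with hK
    have hKne : K.Nonempty := by
      have hlt : (i : ℕ) + 1 < n := by
        have := j.isLt; omega
      refine ⟨⟨(i : ℕ) + 1, hlt⟩, ?_⟩
      simp only [hK, Finset.mem_filter, Finset.mem_univ, true_and]
      refine ⟨by rw [Fin.lt_def]; simp, by rw [Fin.lt_def]; simp; omega, ?_⟩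
      exact consec i ⟨(i : ℕ) + 1, hlt⟩ (by rw [Fin.lt_def]; simp) (by simp)
    set k := K.max' hKne with hk
    have hkmem := K.max'_mem hKne
    simp only [hK, Finset.mem_filter, Finset.mem_univ, true_and] at hkmem
    obtain ⟨hik, hkj, hEik⟩ := hkmem
    have hnEkj : ¬ E k j := hcon k hik hkj hEik
    obtain ⟨c, d, hEcd, hdisj⟩ := conflictE k j hkj hnEkj
    rcases hdisj with ⟨h1, h2, h3⟩ | ⟨h1, h2, h3⟩
    · exact noX i j c d hEij hEcd ⟨lt_trans hik h1, h2, h3⟩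
    · rcases lt_trichotomy c i with hci | hci | hci
      · exact noX c d i j hEcd hEij ⟨hci, lt_trans hik h2, h3⟩
      · subst hci
        have hdK : d ∈ K := by
          simp only [hK, Finset.mem_filter, Finset.mem_univ, true_and]
          exact ⟨lt_trans hik h2, h3, hEcd⟩
        have := K.le_max' d hdK
        rw [← hk] at this
        exact absurd h2 (not_lt.mpr this)
      · exact noX i k c d hEik hEcd ⟨hci, h1, h2⟩
  obtain ⟨u, hu0, hue, hedge, hinj, _⟩ := aux_path E htri (n - 1) i0 iN hi0N
    (by simp [hi0, hiN]) wrap (l - 1) (by omega) (by omega)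
  have key : ∀ a b : Fin l, (b : ℕ) = ((a : ℕ) + 1) % l → G.Adj (v (u (a : ℕ))) (v (u (b : ℕ))) := by
    intro a b hab
    by_cases hc : (a : ℕ) + 1 < l
    · rw [hab, Nat.mod_eq_of_lt hc]
      exact hedge (a : ℕ) (by omega)
    · have ha : (a : ℕ) = l - 1 := by have := a.isLt; omega
      have hb : (b : ℕ) = 0 := by
        rw [hab, ha]
        have : l - 1 + 1 = l := by omega
        rw [this, Nat.mod_self]
      rw [ha, hb, hu0]
      have : l - 1 = l - 1 := rfl
      rw [hue]
      exact (wrap).symm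
  have hsub : ∀ a b : Fin l, (b - a : Fin l).val = 1 → (b : ℕ) = ((a : ℕ) + 1) % l := by
    intro a b hab
    have hl0 : 0 < l := by omega
    haveI : NeZero l := ⟨by omega⟩
    have h1v : ((1 : Fin l) : ℕ) = 1 := by
      rw [Fin.val_one']
      exact Nat.mod_eq_of_lt (by omega)
    have : b - a = (1 : Fin l) := Fin.ext (by rw [hab, h1v])
    have hba : b = a + 1 := by
      have := sub_eq_iff_eq_add.mp this
      rw [this, add_comm]
    rw [hba, Fin.add_def, h1v]
  refine ⟨⟨fun t : Fin l => v (u (t : ℕ)), ?_⟩, ?_⟩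
  · intro a b hadj
    rw [SimpleGraph.cycleGraph_adj'] at hadj
    rcases hadj with h | h
    · exact (key b a (hsub b a h)).symm
    · exact key a b (hsub a b h)
  · intro a b hab
    exact Fin.ext (hinj (a : ℕ) (b : ℕ) (by have := a.isLt; omega)
      (by have := b.isLt; omega) (hvinj hab))
end

section
/- For all integers n and k with n ≥ k ≥ 4, the maximum number of edges in an outerplanar graph on n vertices that contains no path on k vertices and in which every connected component has at most k − 1 vertices equals 2n − 3⌈n/(k−1)⌉ + 1 if n ≡ 1 (mod k − 1), and equals 2n − 3⌈n/(k−1)⌉ otherwise. -/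
/-- The maximum number of edges of a connected `H`-free outerplanar graph on `n` vertices. -/
noncomputable def exOP' (n : ℕ) {W : Type*} (H : SimpleGraph W) : ℕ :=
  sSup {m : ℕ | ∃ G : SimpleGraph (Fin n),
    IsOuterplanar G ∧ G.Connected ∧ ¬ ContainsCopy H G ∧ m = G.edgeSet.ncard}

/-- The maximum number of edges of an `H`-free outerplanar graph on `n` vertices
all of whose connected components have at most `k - 1` vertices. -/
noncomputable def exOP'' (n k : ℕ) {W : Type*} (H : SimpleGraph W) : ℕ :=
  sSup {m : ℕ | ∃ G : SimpleGraph (Fin n),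
    IsOuterplanar G ∧ (∀ c : G.ConnectedComponent, c.supp.ncard ≤ k - 1) ∧
    ¬ ContainsCopy H G ∧ m = G.edgeSet.ncard}

/-!
Label the vertices along the spine of a one-page book embedding. The edges inside a component
on `s` vertices become non-crossing arcs on `s` points, and there are at most `2 * s - 3` of them.
As long as sizes stay at most `m = k - 1`, merging components can only raise the total bound
`∑ (2 * s - 3)`, so for `n = q * m + r` it is at most `q * (2 * m - 3) + (2 * r - 3)`. A forest of
fans on consecutive blocks of `m` vertices attains this, and components of fewer than `k` vertices
cannot contain `P_k`.
-/

open Finset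

def IsNoncrossing (E : Set (ℤ × ℤ)) : Prop :=
  ∀ p ∈ E, ∀ q ∈ E, ¬(p.1 < q.1 ∧ q.1 < p.2 ∧ p.2 < q.2)

def IsInnermostOver (E : Set (ℤ × ℤ)) (p : ℤ × ℤ) (x : ℤ) : Prop :=
  p.1 < x ∧ x < p.2 ∧ ∀ q ∈ E, q ≠ p → p.1 ≤ q.1 → q.2 ≤ p.2 → ¬(q.1 < x ∧ x < q.2)

namespace IsNoncrossing

variable {E : Set (ℤ × ℤ)}

theorem eq_of_isInnermostOver (hE : IsNoncrossing E) {p q : ℤ × ℤ} {x : ℤ} (hp : p ∈ E)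
    (hq : q ∈ E) (hpx : IsInnermostOver E p x) (hqx : IsInnermostOver E q x) : p = q := by
  by_contra hne
  have hqp := hpx.2.2 q hq (Ne.symm hne)
  have hpq := hqx.2.2 p hp hne
  have := hE p hp q hq
  have := hE q hq p hp
  obtain ⟨hp₁, hp₂, -⟩ := hpx
  obtain ⟨hq₁, hq₂, -⟩ := hqx
  omega

theorem exists_isInnermostOver {E : Finset (ℤ × ℤ)} {S : Finset ℤ} (hE : IsNoncrossing E)
    (hES : ∀ p ∈ E, p.1 < p.2 ∧ p.1 ∈ S ∧ p.2 ∈ S) (p : ℤ × ℤ) {x₀ : ℤ} (hx₀ : x₀ ∈ S)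
    (h₁ : p.1 < x₀) (h₂ : x₀ < p.2) : ∃ x ∈ S, IsInnermostOver E p x := by
  set N := E.filter fun q => q ≠ p ∧ p.1 ≤ q.1 ∧ q.2 ≤ p.2
  rcases N.eq_empty_or_nonempty with hN | hN
  · refine ⟨x₀, hx₀, h₁, h₂, fun q hq hqp hl hr _ => ?_⟩
    exact notMem_empty q (hN ▸ mem_filter.2 ⟨hq, hqp, hl, hr⟩)
  -- An endpoint of a longest arc nested in `p` lies directly below `p`.
  obtain ⟨q₁, hq₁, hmax⟩ := N.exists_max_image (fun q => q.2 - q.1) hN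
  obtain ⟨hq₁E, hq₁p, hq₁l, hq₁r⟩ := mem_filter.1 hq₁
  obtain ⟨hq₁, hq₁S₁, hq₁S₂⟩ := hES q₁ hq₁E
  have hlonger : ∀ q ∈ E, q ≠ p → p.1 ≤ q.1 → q.2 ≤ p.2 → q.2 - q.1 ≤ q₁.2 - q₁.1 :=
    fun q hq hqp hl hr => hmax q (mem_filter.2 ⟨hq, hqp, hl, hr⟩)
  by_cases hend : q₁.2 < p.2
  · refine ⟨q₁.2, hq₁S₂, by omega, hend, fun q hq hqp hl hr hcov => ?_⟩
    have := hE q₁ hq₁E q hq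
    have := hlonger q hq hqp hl hr
    omega
  · have hstart : p.1 < q₁.1 :=
      lt_of_le_of_ne hq₁l fun h => hq₁p (Prod.ext h.symm (by omega))
    refine ⟨q₁.1, hq₁S₁, hstart, by omega, fun q hq hqp hl hr hcov => ?_⟩
    have := hE q hq q₁ hq₁E
    have := hlonger q hq hqp hl hr
    omega

theorem card_le {E : Finset (ℤ × ℤ)} {S : Finset ℤ} (hE : IsNoncrossing E)
    (hES : ∀ p ∈ E, p.1 < p.2 ∧ p.1 ∈ S ∧ p.2 ∈ S) : #E ≤ 2 * #S - 3 := by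
  obtain rfl | ⟨p₀, hp₀⟩ := E.eq_empty_or_nonempty
  · simp
  have hS : S.Nonempty := ⟨p₀.1, (hES p₀ hp₀).2.1⟩
  set lo := S.min' hS
  set hi := S.max' hS
  have hbounds : ∀ p ∈ E, lo ≤ p.1 ∧ p.2 ≤ hi := fun p hp =>
    ⟨S.min'_le _ (hES p hp).2.1, S.le_max' _ (hES p hp).2.2⟩
  have hlohi : lo < hi := by
    have := hbounds p₀ hp₀; have := (hES p₀ hp₀).1; omega
  -- Arcs with no point of `S` below them are determined by their left end, which is not `hi`;
  -- the others by a point directly below them, which is neither `lo` nor `hi`.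
  set IsLong := fun p : ℤ × ℤ => ∃ x ∈ S, p.1 < x ∧ x < p.2
  have hshort : #(E.filter fun p => ¬IsLong p) ≤ #(S.erase hi) := by
    refine card_le_card_of_injOn Prod.fst (fun p hp => ?_) fun p hp q hq hpq => ?_
    · obtain ⟨hp, -⟩ := mem_filter.1 hp
      have := (hES p hp).1; have := hbounds p hp
      exact mem_erase.2 ⟨by omega, (hES p hp).2.1⟩
    · obtain ⟨hpE, hpl⟩ := mem_filter.1 hp
      obtain ⟨hqE, hql⟩ := mem_filter.1 hq
      have := (hES p hpE).1; have := (hES q hqE).1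
      refine Prod.ext hpq (le_antisymm ?_ ?_)
      · exact not_lt.1 fun h => hpl ⟨q.2, (hES q hqE).2.2, by omega, h⟩
      · exact not_lt.1 fun h => hql ⟨p.2, (hES p hpE).2.2, by omega, h⟩
  have hlong : #(E.filter IsLong) ≤ #((S.erase hi).erase lo) := by
    refine card_le_card_of_forall_subsingleton (fun p x => IsInnermostOver E p x)
      (fun p hp => ?_) fun x _ p hp q hq => hE.eq_of_isInnermostOver (mem_filter.1 hp.1).1
        (mem_filter.1 hq.1).1 hp.2 hq.2
    obtain ⟨hpE, x₀, hx₀, h₁, h₂⟩ := mem_filter.1 hp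
    obtain ⟨x, hx, hpx⟩ := hE.exists_isInnermostOver hES p hx₀ h₁ h₂
    have := hbounds p hpE; have := hpx.1; have := hpx.2.1
    exact ⟨x, mem_erase.2 ⟨by omega, mem_erase.2 ⟨by omega, hx⟩⟩, hpx⟩
  rw [card_erase_of_mem (S.max'_mem hS)] at hshort
  rw [card_erase_of_mem (mem_erase.2 ⟨hlohi.ne, S.min'_mem hS⟩),
    card_erase_of_mem (S.max'_mem hS)] at hlong
  rw [← card_filter_add_card_filter_not IsLong]
  omega

end IsNoncrossing

namespace SimpleGraph

variable {V α : Type*} (G : SimpleGraph V) [Fintype V] [DecidableRel G.Adj]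

theorem card_edgeFinset_eq_card_filter_lt [LinearOrder α] {f : V → α} (hf : f.Injective) :
    #G.edgeFinset = #{p : V × V | G.Adj p.1 p.2 ∧ f p.1 < f p.2} := by
  symm
  refine card_nbij (fun p => s(p.1, p.2)) (fun p hp => ?_) (fun p hp q hq hpq => ?_) ?_
  · simpa using (mem_filter.1 hp).2.1
  · simp only [coe_filter, Set.mem_ofPred_eq, mem_univ, true_and] at hp hq
    rcases Sym2.eq_iff.1 hpq with h | ⟨h₁, h₂⟩
    · exact Prod.ext h.1 h.2
    · rw [← h₁, ← h₂] at hq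
      exact absurd hp.2 (lt_asymm hq.2)
  · intro e he
    induction e with
    | _ u v =>
      have huv : G.Adj u v := by simpa using he
      rcases lt_or_gt_of_ne (hf.ne huv.ne) with h | h
      · exact ⟨(u, v), by simp [huv, h], rfl⟩
      · exact ⟨(v, u), by simp [huv.symm, h], Sym2.eq_swap⟩

theorem card_filter_adj_lt_le [DecidableEq V] {f : V → ℤ} (hf : f.Injective)
    (hnc : ∀ a b c d, G.Adj a b → G.Adj c d → ¬(f a < f c ∧ f c < f b ∧ f b < f d))
    (s : Finset V) :
    #{p : V × V | G.Adj p.1 p.2 ∧ f p.1 < f p.2 ∧ p.1 ∈ s ∧ p.2 ∈ s} ≤ 2 * #s - 3 := by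
  set P := ({p : V × V | G.Adj p.1 p.2 ∧ f p.1 < f p.2 ∧ p.1 ∈ s ∧ p.2 ∈ s} : Finset (V × V))
  have hfinj : (Prod.map f f).Injective := hf.prodMap hf
  rw [← card_image_of_injective P hfinj, ← card_image_of_injective s hf]
  refine IsNoncrossing.card_le ?_ fun p hp => ?_
  · intro p hp q hq
    obtain ⟨p, hpP, rfl⟩ := mem_image.1 hp
    obtain ⟨q, hqP, rfl⟩ := mem_image.1 hq
    exact hnc _ _ _ _ (mem_filter.1 hpP).2.1 (mem_filter.1 hqP).2.1
  · obtain ⟨p, hpP, rfl⟩ := mem_image.1 hp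
    obtain ⟨-, -, h, h₁, h₂⟩ := mem_filter.1 hpP
    exact ⟨h, mem_image_of_mem f h₁, mem_image_of_mem f h₂⟩

end SimpleGraph

-- A fan on `s` vertices has `2 * s - 3` edges; the truncated subtraction is right for `s ≤ 1` too.
def fanForestEdgeCount (n m : ℕ) : ℕ := n / m * (2 * m - 3) + (2 * (n % m) - 3)

theorem fanForestEdgeCount_mul_add {m r : ℕ} (q : ℕ) (hr : r < m) :
    fanForestEdgeCount (m * q + r) m = q * (2 * m - 3) + (2 * r - 3) := by
  have hm : 0 < m := by omega
  rw [fanForestEdgeCount, Nat.mul_add_div hm, Nat.div_eq_of_lt hr, Nat.mul_add_mod,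
    Nat.mod_eq_of_lt hr, add_zero]

theorem exists_eq_mul_add_of_pos {m : ℕ} (hm : 0 < m) (n : ℕ) : ∃ q r, r < m ∧ n = m * q + r :=
  ⟨n / m, n % m, Nat.mod_lt n hm, (Nat.div_add_mod n m).symm⟩

theorem fanForestEdgeCount_add_le {m b : ℕ} (a : ℕ) (hb : b ≤ m) :
    fanForestEdgeCount a m + (2 * b - 3) ≤ fanForestEdgeCount (a + b) m := by
  rcases Nat.eq_zero_or_pos m with rfl | hm
  · simp [Nat.le_zero.1 hb]
  obtain ⟨q, r, hr, rfl⟩ := exists_eq_mul_add_of_pos hm a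
  rw [fanForestEdgeCount_mul_add _ hr]
  by_cases hrb : r + b < m
  · rw [add_assoc (m * q), fanForestEdgeCount_mul_add _ hrb]
    omega
  · rw [show m * q + r + b = m * (q + 1) + (r + b - m) by rw [mul_add_one]; omega,
      fanForestEdgeCount_mul_add _ (by omega), add_one_mul]
    omega

theorem sum_le_fanForestEdgeCount {ι : Type*} {m : ℕ} (s : Finset ι) {a : ι → ℕ}
    (ha : ∀ i ∈ s, a i ≤ m) :
    ∑ i ∈ s, (2 * a i - 3) ≤ fanForestEdgeCount (∑ i ∈ s, a i) m := by
  classical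
  induction s using Finset.induction_on with
  | empty => simp [fanForestEdgeCount]
  | insert i s hi ih =>
    rw [sum_insert hi, sum_insert hi, add_comm, add_comm (a i)]
    exact (Nat.add_le_add_right (ih fun j hj => ha j (mem_insert_of_mem hj)) _).trans
      (fanForestEdgeCount_add_le _ (ha i (mem_insert_self i s)))

theorem fanForestEdgeCount_succ {m : ℕ} (hm : 0 < m) (n : ℕ) :
    fanForestEdgeCount (n + 1) m = fanForestEdgeCount n m + min (n % m) 2 := by
  obtain ⟨q, r, hr, rfl⟩ := exists_eq_mul_add_of_pos hm n
  rw [fanForestEdgeCount_mul_add _ hr, Nat.mul_add_mod, Nat.mod_eq_of_lt hr]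
  by_cases hr' : r + 1 < m
  · rw [add_assoc (m * q), fanForestEdgeCount_mul_add _ hr']
    omega
  · rw [show m * q + r + 1 = m * (q + 1) + 0 by rw [mul_add_one]; omega,
      fanForestEdgeCount_mul_add _ hm, add_one_mul]
    omega

theorem sum_range_min_mod_two {m : ℕ} (hm : 0 < m) (n : ℕ) :
    ∑ b ∈ range n, min (b % m) 2 = fanForestEdgeCount n m := by
  induction n with
  | zero => simp [fanForestEdgeCount]
  | succ n ih => rw [sum_range_succ, ih, fanForestEdgeCount_succ hm]

theorem intCast_fanForestEdgeCount {m : ℕ} (hm : 2 ≤ m) (n : ℕ) :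
    (fanForestEdgeCount n m : ℤ) =
      if n % m = 1 then 2 * (n : ℤ) - 3 * ⌈(n : ℚ) / (m : ℚ)⌉ + 1
      else 2 * (n : ℤ) - 3 * ⌈(n : ℚ) / (m : ℚ)⌉ := by
  obtain ⟨q, r, hr, rfl⟩ := exists_eq_mul_add_of_pos (m := m) (by omega) n
  have hmq : (0 : ℚ) < m := by exact_mod_cast (by omega : 0 < m)
  have hceil : ⌈((m * q + r : ℕ) : ℚ) / m⌉ = q + if r = 0 then 0 else 1 := by
    rw [Nat.cast_add, Nat.cast_mul, add_div, mul_div_cancel_left₀ _ hmq.ne', add_comm,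
      Int.ceil_add_natCast, add_comm]
    congr 1
    split_ifs with hr0
    · simp [hr0]
    · refine Int.ceil_eq_iff.2 ⟨?_, ?_⟩
      · have : (0 : ℚ) < r := by exact_mod_cast Nat.pos_of_ne_zero hr0
        norm_num; positivity
      · rw [div_le_iff₀ hmq]; norm_num; exact_mod_cast hr.le
  rw [fanForestEdgeCount_mul_add _ hr, Nat.mul_add_mod, Nat.mod_eq_of_lt hr, hceil]
  have h2m : ((2 * m - 3 : ℕ) : ℤ) = 2 * m - 3 := by
    push_cast [Nat.cast_sub (by omega : 3 ≤ 2 * m)]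
    ring
  split_ifs with h1 h0 <;> push_cast [h2m] <;> ring_nf <;> omega

-- The parents of `b` are its predecessor and the first vertex of its block of `m` consecutive
-- numbers; each block thus carries a fan.
def IsFanParent (m a b : ℕ) : Prop := b % m ≠ 0 ∧ (a + 1 = b ∨ a + b % m = b)

instance (m : ℕ) : DecidableRel (IsFanParent m) := fun _ _ =>
  inferInstanceAs (Decidable (_ ∧ _))

namespace IsFanParent

variable {m a b : ℕ}

theorem lt (h : IsFanParent m a b) : a < b := by
  obtain ⟨h0, h | h⟩ := h <;> omega

theorem mod_eq_zero (h : IsFanParent m a b) (hab : a + 1 < b) : a % m = 0 := by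
  obtain ⟨-, h | h⟩ := h
  · omega
  · have := Nat.div_add_mod b m
    rw [show a = m * (b / m) by omega, Nat.mul_mod_right]

theorem div_eq (h : IsFanParent m a b) : a / m = b / m := by
  rcases Nat.eq_zero_or_pos m with rfl | hm
  · simp
  have hb := Nat.div_add_mod b m
  have hr := Nat.mod_lt b hm
  obtain ⟨h0, h | h⟩ := h
  · rw [show a = m * (b / m) + (b % m - 1) by omega, Nat.mul_add_div hm,
      Nat.div_eq_of_lt (show b % m - 1 < m by omega), add_zero]
  · rw [show a = m * (b / m) by omega, Nat.mul_div_cancel_left _ hm]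

end IsFanParent

theorem card_filter_isFanParent (m : ℕ) {n b : ℕ} (hb : b < n) :
    #{a ∈ range n | IsFanParent m a b} = min (b % m) 2 := by
  have := Nat.mod_le b m
  by_cases h0 : b % m = 0
  · rw [filter_false_of_mem fun a _ h => h.1 h0, card_empty, h0]; rfl
  by_cases h1 : b % m = 1
  · rw [show {a ∈ range n | IsFanParent m a b} = {b - 1} by
      ext a; rw [mem_filter, mem_range, mem_singleton, IsFanParent]; omega]
    simp [h1]
  · rw [show {a ∈ range n | IsFanParent m a b} = {b - 1, b - b % m} by
      ext a; rw [mem_filter, mem_range, mem_insert, mem_singleton, IsFanParent]; omega,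
      card_pair (by omega)]
    omega

def fanForest (n m : ℕ) : SimpleGraph (Fin n) :=
  SimpleGraph.fromRel fun u v => IsFanParent m u v

theorem fanForest_adj_and_lt_iff {n m : ℕ} {u v : Fin n} :
    (fanForest n m).Adj u v ∧ u < v ↔ IsFanParent m u v := by
  refine ⟨fun ⟨⟨_, h⟩, huv⟩ => h.resolve_right fun h' => ?_, fun h => ⟨⟨?_, .inl h⟩, h.lt⟩⟩
  · exact absurd h'.lt (not_lt.2 huv.le)
  · exact fun huv => (h.lt.ne (congrArg Fin.val huv))

theorem fanForest_isOuterplanar (n m : ℕ) : IsOuterplanar (fanForest n m) := by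
  refine ⟨fun v => v, Nat.cast_injective.comp Fin.val_injective, ?_⟩
  rintro a b c d hab hcd ⟨hac, hcb, hbd⟩
  simp only [Nat.cast_lt] at hac hcb hbd
  have hab' := fanForest_adj_and_lt_iff.1 ⟨hab, (hac.trans hcb)⟩
  have hcd' := fanForest_adj_and_lt_iff.1 ⟨hcd, (hcb.trans hbd)⟩
  -- Strictly inside the chord `ab`, `c` lies in the block started by `a`, so it starts no chord.
  have hc : (c : ℕ) / m = a / m := le_antisymm
    (hab'.div_eq ▸ Nat.div_le_div_right hcb.le) (Nat.div_le_div_right hac.le)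
  have ha₀ := hab'.mod_eq_zero (by omega)
  have hc₀ := hcd'.mod_eq_zero (by omega)
  have ha := Nat.div_add_mod (a : ℕ) m
  have hc' := Nat.div_add_mod (c : ℕ) m
  rw [hc] at hc'
  omega

theorem fanForest_reachable_div_eq {n m : ℕ} {u v : Fin n} (h : (fanForest n m).Reachable u v) :
    (u : ℕ) / m = v / m := by
  obtain ⟨w⟩ := h
  induction w with
  | nil => rfl
  | cons hadj _ ih =>
    obtain ⟨-, h | h⟩ := hadj
    · exact h.div_eq.trans ih
    · exact h.div_eq.symm.trans ih

theorem fanForest_ncard_supp_le {n m : ℕ} (hm : 0 < m)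
    (c : (fanForest n m).ConnectedComponent) : c.supp.ncard ≤ m := by
  obtain ⟨v, rfl⟩ := c.exists_rep
  calc _ ≤ ({u : Fin n | (u : ℕ) / m = v / m} : Set (Fin n)).ncard :=
        Set.ncard_le_ncard fun u hu =>
          fanForest_reachable_div_eq (SimpleGraph.ConnectedComponent.exact hu)
    _ ≤ (Set.univ : Set (Fin m)).ncard := by
        refine Set.ncard_le_ncard_of_injOn (fun u => ⟨u % m, Nat.mod_lt _ hm⟩)
          (fun _ _ => trivial) fun u hu w hw huw => Fin.ext ?_
        simp only [Set.mem_ofPred_eq, Fin.mk.injEq] at hu hw huw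
        rw [← Nat.div_add_mod (u : ℕ) m, ← Nat.div_add_mod (w : ℕ) m, hu, hw, huw]
    _ = m := by simp

theorem fanForest_ncard_edgeSet {m : ℕ} (hm : 0 < m) (n : ℕ) :
    (fanForest n m).edgeSet.ncard = fanForestEdgeCount n m := by
  classical
  calc (fanForest n m).edgeSet.ncard
      = #{p : Fin n × Fin n | IsFanParent m p.1 p.2} := by
        rw [← SimpleGraph.coe_edgeFinset, Set.ncard_coe_finset,
          SimpleGraph.card_edgeFinset_eq_card_filter_lt _ (f := id) Function.injective_id]
        simp only [id, fanForest_adj_and_lt_iff]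
    _ = ∑ b : Fin n, ∑ a : Fin n, if IsFanParent m a b then 1 else 0 := by
        rw [card_filter, Fintype.sum_prod_type_right]
    _ = ∑ b ∈ range n, min (b % m) 2 := by
        rw [← Fin.sum_univ_eq_sum_range]
        refine sum_congr rfl fun b _ => ?_
        rw [Fin.sum_univ_eq_sum_range (fun a => if IsFanParent m a b then 1 else 0),
          ← card_filter, card_filter_isFanParent m b.2]
    _ = fanForestEdgeCount n m := sum_range_min_mod_two hm n

theorem IsOuterplanar.ncard_edgeSet_le {V : Type*} [Fintype V] {G : SimpleGraph V}
    (hG : IsOuterplanar G) {m : ℕ} (hc : ∀ c : G.ConnectedComponent, c.supp.ncard ≤ m) :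
    G.edgeSet.ncard ≤ fanForestEdgeCount (Fintype.card V) m := by
  classical
  obtain ⟨f, hf, hnc⟩ := hG
  set comp := fun c : G.ConnectedComponent => ({v | G.connectedComponentMk v = c} : Finset V)
  have hcomp : ∀ c, #(comp c) = c.supp.ncard := fun c => by
    rw [← Set.ncard_coe_finset]
    congr
    ext v
    simp [comp, SimpleGraph.ConnectedComponent.mem_supp_iff]
  calc G.edgeSet.ncard = #{p : V × V | G.Adj p.1 p.2 ∧ f p.1 < f p.2} := by
        rw [← SimpleGraph.coe_edgeFinset, Set.ncard_coe_finset,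
          G.card_edgeFinset_eq_card_filter_lt hf]
    _ = ∑ c, #{p ∈ ({p : V × V | G.Adj p.1 p.2 ∧ f p.1 < f p.2} : Finset _) |
          G.connectedComponentMk p.1 = c} :=
        card_eq_sum_card_fiberwise fun _ _ => mem_univ _
    _ ≤ ∑ c, (2 * #(comp c) - 3) := by
        refine sum_le_sum fun c _ => (card_le_card fun p hp => ?_).trans
          (G.card_filter_adj_lt_le hf hnc (comp c))
        simp only [mem_filter, mem_univ, true_and, comp] at hp ⊢
        exact ⟨hp.1.1, hp.1.2, hp.2,
          (SimpleGraph.ConnectedComponent.connectedComponentMk_eq_of_adj hp.1.1).symm.trans hp.2⟩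
    _ ≤ fanForestEdgeCount (∑ c, #(comp c)) m :=
        sum_le_fanForestEdgeCount _ fun c _ => (hcomp c).trans_le (hc c)
    _ = fanForestEdgeCount (Fintype.card V) m := by
        rw [← card_univ, card_eq_sum_card_fiberwise fun v _ => mem_univ (G.connectedComponentMk v)]

theorem not_containsCopy_of_ncard_supp_lt {V W : Type*} [Finite V] {H : SimpleGraph W}
    {G : SimpleGraph V} (hH : H.Connected)
    (hG : ∀ c : G.ConnectedComponent, c.supp.ncard < Nat.card W) : ¬ContainsCopy H G := by
  rintro ⟨φ, hφ⟩
  obtain ⟨w⟩ := hH.nonempty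
  have hsub : Set.range φ ⊆ (G.connectedComponentMk (φ w)).supp := by
    rintro _ ⟨u, rfl⟩
    exact SimpleGraph.ConnectedComponent.sound ((hH u w).map φ)
  have := Set.ncard_le_ncard hsub (Set.toFinite _)
  rw [Set.ncard_range_of_injective hφ] at this
  exact (hG _).not_ge this

theorem exOP''_path_general (n k : ℕ) (hk : 4 ≤ k) :
    (exOP'' n k (SimpleGraph.pathGraph k) : ℤ) =
      if n % (k - 1) = 1 then 2 * (n : ℤ) - 3 * ⌈(n : ℚ) / ((k : ℚ) - 1)⌉ + 1
      else 2 * (n : ℤ) - 3 * ⌈(n : ℚ) / ((k : ℚ) - 1)⌉ := by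
  have hpath : (SimpleGraph.pathGraph k).Connected := by
    obtain ⟨j, rfl⟩ : ∃ j, k = j + 1 := ⟨k - 1, by omega⟩
    exact SimpleGraph.pathGraph_connected j
  have hgreatest : IsGreatest {m : ℕ | ∃ G : SimpleGraph (Fin n), IsOuterplanar G ∧
      (∀ c : G.ConnectedComponent, c.supp.ncard ≤ k - 1) ∧
      ¬ContainsCopy (SimpleGraph.pathGraph k) G ∧ m = G.edgeSet.ncard}
      (fanForestEdgeCount n (k - 1)) := by
    refine ⟨⟨fanForest n (k - 1), fanForest_isOuterplanar n _,
      fanForest_ncard_supp_le (by omega), not_containsCopy_of_ncard_supp_lt hpath fun c => ?_,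
      (fanForest_ncard_edgeSet (by omega) n).symm⟩, ?_⟩
    · have := fanForest_ncard_supp_le (by omega) c
      rw [Nat.card_fin]
      omega
    · rintro _ ⟨G, hG, hc, -, rfl⟩
      simpa using hG.ncard_edgeSet_le hc
  rw [exOP'', hgreatest.csSup_eq, intCast_fanForestEdgeCount (by omega),
    Nat.cast_pred (by omega : 0 < k)]

theorem exOP''_path (n k : ℕ) (hk : 4 ≤ k) (hn : k ≤ n) :
    (exOP'' n k (SimpleGraph.pathGraph k) : ℤ) =
      if n % (k - 1) = 1 then 2 * (n : ℤ) - 3 * ⌈(n : ℚ) / ((k : ℚ) - 1)⌉ + 1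
      else 2 * (n : ℤ) - 3 * ⌈(n : ℚ) / ((k : ℚ) - 1)⌉ :=
  exOP''_path_general n k hk
end

section
/- Let n and k be integers with n ≥ k ≥ 4. The minimum integer t ≥ 2 for which there exist integers n₁, …, n_t, each at least 2, satisfying ∑_{i=1}^{t} (n_i − 1) = n − 1 and n_i + n_j ≤ k for all i ≠ j, equals ⌈(n − k + 2⌊k/2⌋ − 1)/(⌊k/2⌋ − 1)⌉, which also equals ⌈(n − k + 1)/(⌊k/2⌋ − 1)⌉ + 2. -/
/-!
Write `h = ⌊k/2⌋`. If sizes `m₁, …, m_t` are pairwise at most `k` in sum, every size except a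
largest one is at most `h`, and a largest one together with any other is at most `k`; hence
`n - 1 = ∑ (mᵢ - 1) ≤ k - 2 + (t - 2)(h - 1)`, i.e. `t - 2 ≥ ⌈(n - k + 1)/(h - 1)⌉`.
Conversely, for `t - 2 = c := ⌈(n - k + 1)/(h - 1)⌉` the capacities `k - h, h, …, h` are pairwise
at most `k` in sum and have total `∑ (capᵢ - 1) ≥ n - 1`, so sizes between `2` and the capacities
summing to the right value exist.
-/

open Finset

theorem Fintype.exists_le_le_sum_eq {ι : Type*} [Fintype ι] [DecidableEq ι] {lo hi : ι → ℕ}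
    (hle : lo ≤ hi) {S : ℕ} (hlo : ∑ i, lo i ≤ S) (hhi : S ≤ ∑ i, hi i) :
    ∃ d, lo ≤ d ∧ d ≤ hi ∧ ∑ i, d i = S := by
  induction S, hlo using Nat.le_induction with
  | base => exact ⟨lo, le_rfl, hle, rfl⟩
  | succ S _ ih =>
    obtain ⟨d, hlo_d, hd_hi, hd⟩ := ih (by omega)
    obtain ⟨i, -, hi⟩ := exists_lt_of_sum_lt (s := univ) (f := d) (g := hi) (by omega)
    refine ⟨d + Pi.single i 1, hlo_d.trans le_self_add, fun j => ?_, ?_⟩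
    · rcases eq_or_ne j i with rfl | hj
      · simpa using hi
      · simpa [hj] using hd_hi j
    · simp [sum_add_distrib, hd]

theorem sum_sub_one_add_two_le {ι : Type*} [Fintype ι] {m : ι → ℕ} {k : ℕ}
    (hcard : 2 ≤ Fintype.card ι) (hm : ∀ i, 1 ≤ m i) (hpair : ∀ i j, i ≠ j → m i + m j ≤ k) :
    ∑ i, (m i - 1) + 2 ≤ k + (Fintype.card ι - 2) * (k / 2 - 1) := by
  classical
  have : Nonempty ι := Fintype.card_pos_iff.1 (by omega)
  obtain ⟨i₀, hi₀⟩ := Finite.exists_max m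
  obtain ⟨j₀, hj₀⟩ := Fintype.exists_ne_of_one_lt_card hcard i₀
  have hj₀_mem : j₀ ∈ univ.erase i₀ := mem_erase.2 ⟨hj₀, mem_univ _⟩
  have hrest : ∑ i ∈ (univ.erase i₀).erase j₀, (m i - 1) ≤ (Fintype.card ι - 2) * (k / 2 - 1) := by
    calc ∑ i ∈ (univ.erase i₀).erase j₀, (m i - 1)
        ≤ #((univ.erase i₀).erase j₀) • (k / 2 - 1) := by
          refine sum_le_card_nsmul _ _ _ fun j hj => ?_
          have hji₀ := ne_of_mem_erase (mem_of_mem_erase hj)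
          have := hpair j i₀ hji₀
          have := hi₀ j
          omega
      _ = (Fintype.card ι - 2) * (k / 2 - 1) := by
          rw [card_erase_of_mem hj₀_mem, card_erase_of_mem (mem_univ _), card_univ, smul_eq_mul,
            Nat.sub_sub]
  rw [← add_sum_erase _ _ (mem_univ i₀), ← add_sum_erase _ _ hj₀_mem]
  have := hpair i₀ j₀ hj₀.symm
  have := hm i₀
  have := hm j₀
  omega

theorem exists_fin_sizes_of_le_mul {n k c : ℕ} (hk : 4 ≤ k) (hcn : c + 3 ≤ n)
    (hc : n - k + 1 ≤ (k / 2 - 1) * c) :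
    ∃ m : Fin (c + 2) → ℕ,
      (∀ i, 2 ≤ m i) ∧ ∑ i, (m i - 1) = n - 1 ∧ ∀ i j, i ≠ j → m i + m j ≤ k := by
  let C : Fin (c + 2) → ℕ := Fin.cons (k - k / 2) fun _ => k / 2
  have hC : ∀ i j, i ≠ j → C i + C j ≤ k := by
    intro i j hij
    cases i using Fin.cases <;> cases j using Fin.cases <;> simp_all [C] <;> omega
  have hcap : ∑ i, (C i - 1) = k - 2 + (k / 2 - 1) * c := by
    simp only [C, Fin.sum_univ_succ, Fin.cons_zero, Fin.cons_succ, sum_const, card_univ,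
      Fintype.card_fin, smul_eq_mul, add_one_mul, mul_comm c]
    omega
  obtain ⟨e, he_lo, he_hi, he⟩ := Fintype.exists_le_le_sum_eq (lo := fun _ => 1)
    (hi := fun i => C i - 1) (S := n - 1) (fun i => by cases i using Fin.cases <;> simp [C] <;> omega)
    (by simp; omega) (by rw [hcap]; omega)
  refine ⟨fun i => e i + 1, fun i => by simpa using he_lo i, by simpa using he, fun i j hij => ?_⟩
  have := hC i j hij
  have := he_hi i
  have := he_hi j
  have := he_lo i
  have := he_lo j
  simp only at *
  omega

theorem Nat.ceil_natCast_div_natCast_eq_ceilDiv {K : Type*} [Field K] [LinearOrder K]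
    [IsStrictOrderedRing K] [FloorSemiring K] (a : ℕ) {b : ℕ} (hb : 0 < b) :
    ⌈(a : K) / b⌉₊ = a ⌈/⌉ b := by
  have hb' : (0 : K) < b := by exact_mod_cast hb
  apply le_antisymm
  · rw [Nat.ceil_le, div_le_iff₀ hb', mul_comm]
    exact_mod_cast le_smul_ceilDiv hb
  · rw [ceilDiv_le_iff_le_mul hb, mul_comm]
    exact_mod_cast (div_le_iff₀ hb').1 (Nat.le_ceil ((a : K) / b))

theorem ceil_sub_add_one_div_eq_ceilDiv {n k h : ℕ} (hn : k ≤ n) (hh : 2 ≤ h) :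
    ⌈((n : ℚ) - k + 1) / ((h : ℚ) - 1)⌉ = ((n - k + 1) ⌈/⌉ (h - 1) : ℕ) := by
  have hq : ((n : ℚ) - k + 1) / ((h : ℚ) - 1) = ((n - k + 1 : ℕ) : ℚ) / ((h - 1 : ℕ) : ℚ) := by
    push_cast [Nat.cast_sub hn, Nat.cast_sub (show 1 ≤ h by omega)]
    ring
  rw [hq, ← Int.natCast_ceil_eq_ceil (by positivity),
    Nat.ceil_natCast_div_natCast_eq_ceilDiv _ (by omega)]

theorem min_t_cactus (n k : ℕ) (hk : 4 ≤ k) (hn : k ≤ n) :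
    ∃ tmin : ℕ,
      IsLeast {t : ℕ | 2 ≤ t ∧ ∃ m : Fin t → ℕ, (∀ i, 2 ≤ m i) ∧
        (∑ i, (m i - 1)) = n - 1 ∧ (∀ i j, i ≠ j → m i + m j ≤ k)} tmin ∧
      (tmin : ℤ) = ⌈((n : ℚ) - (k : ℚ) + 2 * ((k / 2 : ℕ) : ℚ) - 1) / (((k / 2 : ℕ) : ℚ) - 1)⌉ ∧
      (tmin : ℤ) = ⌈((n : ℚ) - (k : ℚ) + 1) / (((k / 2 : ℕ) : ℚ) - 1)⌉ + 2 := by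
  have hh : 1 ≤ k / 2 - 1 := by omega
  set c := (n - k + 1) ⌈/⌉ (k / 2 - 1)
  have hc : ∀ t, c ≤ t ↔ n - k + 1 ≤ (k / 2 - 1) * t := fun t => ceilDiv_le_iff_le_mul hh
  have hcn : c + 3 ≤ n := by
    have := (hc (n - k + 1)).2 (Nat.le_mul_of_pos_left _ hh)
    omega
  have hceil : ⌈((n : ℚ) - k + 1) / (((k / 2 : ℕ) : ℚ) - 1)⌉ = c :=
    ceil_sub_add_one_div_eq_ceilDiv hn (by omega)
  refine ⟨c + 2, ⟨⟨by omega, exists_fin_sizes_of_le_mul hk hcn ((hc c).1 le_rfl)⟩, ?_⟩, ?_, ?_⟩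
  · rintro t ⟨ht, m, hm, hsum, hpair⟩
    have := sum_sub_one_add_two_le (by simpa using ht) (fun i => one_le_two.trans (hm i)) hpair
    rw [Fintype.card_fin, hsum] at this
    have := (hc (t - 2)).2 (by rw [mul_comm]; omega)
    omega
  · have hsplit : ((n : ℚ) - k + 2 * ((k / 2 : ℕ) : ℚ) - 1) / (((k / 2 : ℕ) : ℚ) - 1)
        = ((n : ℚ) - k + 1) / (((k / 2 : ℕ) : ℚ) - 1) + 2 := by
      have : ((k / 2 : ℕ) : ℚ) - 1 ≠ 0 := sub_ne_zero.2 (by norm_cast; omega)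
      field_simp
      ring
    rw [hsplit, Int.ceil_add_ofNat, hceil]
    push_cast
    ring
  · rw [hceil]
    push_cast
    ring
end

section
/- Let n and k be integers with n ≥ k ≥ 4, and define w(1) = 0 and w(m) = 2m − 3 for integers m ≥ 2. The maximum of ∑_{i=1}^{s} w(n_i), taken over all s ≥ 1 and all integers n₁, …, n_s with 1 ≤ n_i ≤ k − 1 for each i and n₁ + ⋯ + n_s = n, equals 2n − 3⌈n/(k−1)⌉ + 1 if n ≡ 1 (mod k − 1), and equals 2n − 3⌈n/(k−1)⌉ otherwise. -/
theorem max_weight_partition (n k : ℕ) (hk : 4 ≤ k) (hn : k ≤ n)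
    (w : ℕ → ℕ) (hw1 : w 1 = 0) (hw : ∀ m : ℕ, 2 ≤ m → w m = 2 * m - 3) :
    ∃ B : ℕ,
      IsGreatest {M : ℕ | ∃ s : ℕ, 1 ≤ s ∧ ∃ a : Fin s → ℕ,
        (∀ i, 1 ≤ a i ∧ a i ≤ k - 1) ∧ (∑ i, a i) = n ∧ M = ∑ i, w (a i)} B ∧
      (B : ℤ) = (if n % (k - 1) = 1 then 2 * (n : ℤ) - 3 * ⌈(n : ℚ) / ((k : ℚ) - 1)⌉ + 1
                 else 2 * (n : ℤ) - 3 * ⌈(n : ℚ) / ((k : ℚ) - 1)⌉) := by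
  obtain ⟨q, rfl⟩ : ∃ q, k = q + 1 := ⟨k - 1, by omega⟩
  have hq : 3 ≤ q := by omega
  have hq0 : 0 < q := by omega
  have hk1 : q + 1 - 1 = q := by omega
  rw [hk1]
  have hn' : q + 1 ≤ n := hn
  set d := n / q with hd
  set r := n % q with hr
  have hnqd : q * d + r = n := Nat.div_add_mod n q
  have hrq : r < q := Nat.mod_lt _ hq0
  have hd1 : 1 ≤ d := by
    rcases Nat.eq_zero_or_pos d with h | h
    · rw [h] at hnqd; omega
    · exact h
  set T : ℕ := if r = 0 then d else d + 1 with hT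
  set E : ℤ := if r = 1 then 1 else 0 with hE
  have hE0 : 0 ≤ E := by rw [hE]; split_ifs <;> norm_num
  have hTle : q * T ≤ n + q - 1 := by
    rw [hT]; split_ifs with h <;> [skip; rw [Nat.mul_add]] <;> omega
  have hTge : n ≤ q * T := by
    rw [hT]; split_ifs with h
    · omega
    · rw [Nat.mul_add]; omega
  -- ceiling identity
  have hceil : ⌈(n : ℚ) / ((((q : ℕ) + 1 : ℕ) : ℚ) - 1)⌉ = (T : ℤ) := by
    have hcast : ((((q : ℕ) + 1 : ℕ) : ℚ) - 1) = (q : ℚ) := by push_cast; ring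
    rw [hcast, Int.ceil_eq_iff]
    have hqQ : (0 : ℚ) < (q : ℚ) := by exact_mod_cast hq0
    constructor
    · rw [lt_div_iff₀ hqQ]
      have h1 : q * (T - 1) < n := by
        rw [hT]; split_ifs with h
        · have h2 : q * (d - 1) < q * d := by
            have := Nat.mul_lt_mul_of_lt_of_le (show d - 1 < d by omega) (le_refl q) hq0
            rw [Nat.mul_comm, Nat.mul_comm d q] at this; exact this
          omega
        · simp only [Nat.add_sub_cancel]; omega
      calc ((T : ℚ) - 1) * q = ((q * (T - 1) : ℕ) : ℚ) := by
            push_cast [Nat.cast_sub (show 1 ≤ T by rw [hT]; split_ifs <;> omega)]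
            ring
        _ < n := by exact_mod_cast h1
    · rw [div_le_iff₀ hqQ]
      calc (n : ℚ) ≤ ((q * T : ℕ) : ℚ) := by exact_mod_cast hTge
        _ = (T : ℚ) * q := by push_cast; ring
  -- construction data
  set r' : ℕ := if r = 0 then q else r with hr'
  set m : ℕ := if r = 0 then d - 1 else d with hm
  have hr'1 : 1 ≤ r' := by rw [hr']; split_ifs <;> omega
  have hr'q : r' ≤ q := by rw [hr']; split_ifs <;> omega
  have hsum0 : r' + m * q = n := by
    have hqd : (q : ℤ) * d + r = n := by exact_mod_cast hnqd
    rw [hr', hm]; split_ifs with h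
    · zify [hd1]
      rw [h] at hqd; push_cast at hqd
      linear_combination hqd
    · zify; linear_combination hqd
  set B : ℕ := w r' + m * w q with hB
  have hwqZ : (w q : ℤ) = 2 * q - 3 := by
    rw [hw q (by omega), Nat.cast_sub (by omega)]; push_cast; ring
  have hBZ : (B : ℤ) = 2 * n - 3 * T + E := by
    have hqd : (q : ℤ) * d + r = n := by exact_mod_cast hnqd
    rw [hB]; push_cast [hwqZ]
    rw [hr', hm, hT, hE]
    by_cases h : r = 0
    · rw [if_pos h, if_pos h, if_pos h, if_neg (by omega : ¬ r = 1)]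
      rw [h] at hqd; push_cast at hqd
      rw [Nat.cast_sub hd1]
      push_cast [hwqZ]
      linear_combination (2 : ℤ) * hqd
    · rw [if_neg h, if_neg h, if_neg h]
      by_cases h1 : r = 1
      · rw [if_pos h1, h1, hw1]
        rw [h1] at hqd
        push_cast
        linear_combination (2 : ℤ) * hqd
      · rw [if_neg h1]
        rw [hw r (by omega), Nat.cast_sub (by omega)]
        push_cast
        linear_combination (2 : ℤ) * hqd
  -- sum over Fin.cons
  have hsumc : ∀ f : ℕ → ℕ, ∑ i : Fin (m + 1), f ((Fin.cons r' (fun _ => q) : Fin (m + 1) → ℕ) i) = f r' + m * f q := by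
    intro f
    rw [Fin.sum_univ_succ]
    simp [Fin.cons_succ, Finset.sum_const, Finset.card_univ, mul_comm]
  -- upper bound
  have hub : ∀ (s : ℕ) (a : Fin s → ℕ), (∀ i, 1 ≤ a i ∧ a i ≤ q) → (∑ i, a i) = n →
      ((∑ i, w (a i) : ℕ) : ℤ) ≤ 2 * n - 3 * T + E := by
    intro s a ha hsum
    classical
    set u := (Finset.univ.filter (fun i : Fin s => a i = 1)).card with hu
    set v := (Finset.univ.filter (fun i : Fin s => ¬ a i = 1)).card with hv
    have huv : u + v = s := by
      rw [hu, hv, Finset.card_filter_add_card_filter_not, Finset.card_univ,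
        Fintype.card_fin]
    have hnuv : n ≤ u + q * v := by
      have h1 : n ≤ ∑ i, (if a i = 1 then 1 else q) := by
        rw [← hsum]
        apply Finset.sum_le_sum
        intro i _
        by_cases h : a i = 1
        · simp [h]
        · simp only [if_neg h]; exact (ha i).2
      have h2 : (∑ i, (if a i = 1 then 1 else q)) = u + q * v := by
        rw [Finset.sum_ite, Finset.sum_const, Finset.sum_const, smul_eq_mul, smul_eq_mul,
          mul_one, mul_comm]
      exact h1.trans (le_of_eq h2)
    have hwsum : ((∑ i, w (a i) : ℕ) : ℤ) = 2 * n - 3 * s + u := by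
      push_cast
      have hpt : ∀ i : Fin s, (w (a i) : ℤ) = 2 * (a i : ℤ) - 3 + (if a i = 1 then 1 else 0) := by
        intro i
        by_cases h : a i = 1
        · rw [h, hw1]; simp
        · have h2 : 2 ≤ a i := by have := (ha i).1; omega
          rw [hw _ h2, if_neg h, Nat.cast_sub (by omega)]
          push_cast; ring
      rw [Finset.sum_congr rfl (fun i _ => hpt i)]
      rw [Finset.sum_add_distrib, Finset.sum_sub_distrib, ← Finset.mul_sum, Finset.sum_const,
        Finset.sum_boole]
      have hsz : (∑ i, (a i : ℤ)) = n := by exact_mod_cast hsum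
      rw [hsz]
      simp [hu, Finset.card_univ, Fintype.card_fin]
      ring
    rw [hwsum]
    -- key inequality: 3T ≤ 2u + 3v + E
    have hA : (q : ℤ) * T ≤ n + q - 1 := by
      have h0 : q * T + 1 ≤ n + q := by omega
      have h1 : ((q * T : ℕ) : ℤ) + 1 ≤ ((n + q : ℕ) : ℤ) := by exact_mod_cast h0
      push_cast at h1
      linarith
    have hBv : (n : ℤ) ≤ u + q * v := by exact_mod_cast hnuv
    have hqd : (q : ℤ) * d + r = n := by exact_mod_cast hnqd
    have hqZ : (3 : ℤ) ≤ q := by exact_mod_cast hq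
    have hdZ : (1 : ℤ) ≤ d := by exact_mod_cast hd1
    have hrZ : (r : ℤ) < q := by exact_mod_cast hrq
    have hvZ : (0 : ℤ) ≤ v := by exact_mod_cast Nat.zero_le v
    have hq0Z : (0 : ℤ) < q := by exact_mod_cast hq0
    have huZ0 : (0 : ℤ) ≤ u := by exact_mod_cast Nat.zero_le u
    have key : 3 * (T : ℤ) ≤ 2 * u + 3 * v + E := by
      have hTcast : (T : ℤ) = if r = 0 then (d : ℤ) else (d : ℤ) + 1 := by
        rw [hT]; split_ifs <;> push_cast <;> ring
      rcases Nat.lt_or_ge u 2 with hu2 | hu2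
      · interval_cases u
        · -- u = 0
          simp only [Nat.cast_zero] at hBv ⊢
          rw [hTcast]
          by_cases h : r = 0
          · rw [if_pos h]
            rw [h] at hqd; push_cast at hqd
            have hdv : (d : ℤ) ≤ v := by
              have hqv : (q : ℤ) * d ≤ q * v := by linarith
              exact le_of_mul_le_mul_left hqv hq0Z
            have := hE0
            linarith
          · rw [if_neg h]
            have hr1 : (1 : ℤ) ≤ r := by
              have : 1 ≤ r := by omega
              exact_mod_cast this
            have hdv : (d : ℤ) < v := by
              have hqv : (q : ℤ) * d < q * v := by linarith
              exact lt_of_mul_lt_mul_left hqv (le_of_lt hq0Z)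
            have := hE0
            linarith
        · -- u = 1
          simp only [Nat.cast_one] at hBv ⊢
          rw [hTcast]
          by_cases h : r = 0
          · rw [if_pos h]
            rw [h] at hqd; push_cast at hqd
            have hdv : (d : ℤ) - 1 < v := by
              have hqv : (q : ℤ) * (d - 1) < q * v := by
                have hexp : (q : ℤ) * (d - 1) = q * d - q := by ring
                linarith
              exact lt_of_mul_lt_mul_left hqv (le_of_lt hq0Z)
            have := hE0
            linarith
          · rw [if_neg h]
            by_cases h1 : r = 1
            · rw [hE, if_pos h1]
              rw [h1] at hqd; push_cast at hqd
              have hdv : (d : ℤ) - 1 < v := by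
                have hqv : (q : ℤ) * (d - 1) < q * v := by
                  have hexp : (q : ℤ) * (d - 1) = q * d - q := by ring
                  linarith
                exact lt_of_mul_lt_mul_left hqv (le_of_lt hq0Z)
              linarith
            · rw [hE, if_neg h1]
              have hr2 : (2 : ℤ) ≤ r := by
                have : 2 ≤ r := by omega
                exact_mod_cast this
              have hdv : (d : ℤ) < v := by
                have hqv : (q : ℤ) * d < q * v := by linarith
                exact lt_of_mul_lt_mul_left hqv (le_of_lt hq0Z)
              linarith
      · -- u ≥ 2
        have huZ : (2 : ℤ) ≤ u := by exact_mod_cast hu2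
        by_contra hc
        push_neg at hc
        have h1 : 2 * (u : ℤ) + 3 * v + 1 ≤ 3 * T := by linarith
        have h2 : (q : ℤ) * (2 * u + 3 * v + 1) ≤ q * (3 * T) :=
          mul_le_mul_of_nonneg_left h1 (le_of_lt hq0Z)
        have p1 : (0 : ℤ) ≤ ((q : ℤ) - 3) * u :=
          mul_nonneg (by linarith) huZ0
        have p2 : (0 : ℤ) ≤ ((u : ℤ) - 2) * q :=
          mul_nonneg (by linarith) (le_of_lt hq0Z)
        have e1 : (q : ℤ) * (2 * u + 3 * v + 1) = 2 * ((q : ℤ) * u) + 3 * ((q : ℤ) * v) + q := by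
          ring
        have e2 : (q : ℤ) * (3 * T) = 3 * ((q : ℤ) * T) := by ring
        have e3 : ((q : ℤ) - 3) * u = (q : ℤ) * u - 3 * u := by ring
        have e4 : ((u : ℤ) - 2) * q = (q : ℤ) * u - 2 * q := by ring
        linarith [h2, hA, hBv, p1, p2, e1, e2, e3, e4]
    have hsuv : (s : ℤ) = u + v := by exact_mod_cast huv.symm
    rw [hsuv]
    linarith
  -- assemble
  refine ⟨B, ⟨⟨m + 1, by omega, (Fin.cons r' (fun _ => q) : Fin (m + 1) → ℕ), ?_, ?_, ?_⟩, ?_⟩, ?_⟩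
  · intro i
    induction i using Fin.cases with
    | zero => simpa using ⟨hr'1, hr'q⟩
    | succ j => simp; omega
  · rw [hsumc (fun x => x)]; exact hsum0
  · rw [hsumc w]
  · intro M hM
    obtain ⟨s, hs, a, ha, hsum, rfl⟩ := hM
    have h1 := hub s a ha hsum
    have h2 : ((∑ i, w (a i) : ℕ) : ℤ) ≤ (B : ℤ) := by rw [hBZ]; exact h1
    exact_mod_cast h2
  · rw [hceil, hBZ, hE]
    by_cases h : r = 1
    · rw [if_pos h, if_pos h]
    · rw [if_neg h, if_neg h]; ring
end
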